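/- arXiv:1011.3145 — 3 statements merged into one kernel-verified Lean document; each statement's English description precedes it below -/
import Mathlib

section
/- For the uniform-ball ansatz: given P > 0, define KE(P) = (3/8)( √(1+P²)/P² + 2√(1+P²) − ln(P+√(1+P²))/P³ ) and let R(P) = 3/(5·KE(P)) be the radius making total energy KE(P) − 3/(5R) zero. Then for all P > 0 and all a ∈ (-1,1), the virial V = (3R(P)/4) · (3P/4) · ((a²−1)/(2(a+1))) satisfies V > −9/20. -/
open Real

theorem uniform_ball_virial_lower_bound
    (P a : ℝ) (hP : 0 < P) (ha : a ∈ Set.Ioo (-1 : ℝ) 1)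
    (KE : ℝ) (hKE : KE = (3/8) * (Real.sqrt (1 + P ^ 2) / P ^ 2
        + 2 * Real.sqrt (1 + P ^ 2) - Real.log (P + Real.sqrt (1 + P ^ 2)) / P ^ 3))
    (R : ℝ) (hR : R = 3 / (5 * KE)) :
    (3 * R / 4) * (3 * P / 4) * ((a ^ 2 - 1) / (2 * (a + 1))) > -(9/20) := by
  obtain ⟨ha1, ha2⟩ := ha
  set s := Real.sqrt (1 + P ^ 2) with hs
  have hs2 : s ^ 2 = 1 + P ^ 2 := Real.sq_sqrt (by positivity)
  have hs0 : 0 < s := Real.sqrt_pos.mpr (by positivity)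
  have hsP : P < s := by nlinarith
  have hs1 : 1 ≤ s := by nlinarith
  -- log (P + s) = arsinh P < P
  have hlog : Real.log (P + s) < P := by
    have h1 : Real.log (P + s) = Real.arsinh P := rfl
    rw [h1]
    have h2 : Real.sinh (Real.arsinh P) < Real.sinh P := by
      rw [Real.sinh_arsinh]
      exact (Real.self_lt_sinh_iff).mpr hP
    exact Real.sinh_lt_sinh.mp h2
  have hlogPs : Real.log (P + s) ≤ P * s := by nlinarith
  have hP2 : (0:ℝ) < P ^ 2 := by positivity
  have hP3 : (0:ℝ) < P ^ 3 := by positivity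
  have h1 : Real.log (P + s) / P ^ 3 ≤ s / P ^ 2 := by
    rw [div_le_div_iff₀ hP3 hP2]
    nlinarith
  have hKEge : 3 / 4 * s ≤ KE := by
    rw [hKE]; linarith
  have hKEgt : 3 * P / 4 < KE := by nlinarith
  have hKE0 : 0 < KE := by linarith
  have hR0 : 0 < R := by rw [hR]; positivity
  have hRP : R * P < 4 / 5 := by
    rw [hR, div_mul_eq_mul_div, div_lt_div_iff₀ (by linarith) (by norm_num)]
    nlinarith
  have hfrac : (a ^ 2 - 1) / (2 * (a + 1)) = (a - 1) / 2 := by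
    have : a + 1 ≠ 0 := by linarith
    field_simp
    ring
  rw [hfrac]
  have key : (0:ℝ) < (4 / 5 - R * P) * (1 - a) := by
    apply mul_pos <;> linarith
  nlinarith [mul_pos hR0 hP]
end

section
/- For the uniform-ball ansatz with zero total energy, the virial satisfies V = (9/16) R(P) P (a−1)/2 ≥ −(9/16) R(P) P > −(9/16)(4/5) = −9/20 for all P > 0 and a ∈ (−1,1]. In particular no zero-energy uniform-ball datum has virial ≤ −1/2. -/
open MeasureTheory Real

theorem uniform_ball_zero_energy_virial_bound
    (P a : ℝ) (hP : 0 < P) (ha : a ∈ Set.Ioc (-1 : ℝ) 1)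
    (KE : ℝ) (hKE : KE = (∫ s in (0:ℝ)..P, s ^ 2 * Real.sqrt (1 + s ^ 2)) /
        (∫ s in (0:ℝ)..P, s ^ 2))
    (R : ℝ) (hR : R = 3 / (5 * KE))
    (V : ℝ) (hV : V = (3 * R / 4) * (3 * P / 4) * ((a - 1) / 2)) :
    V ≥ -((9/16) * (R * P)) ∧ -((9/16) * (R * P)) > -(9/20) ∧ ¬ V ≤ -(1/2) := by
  have hI1 : (∫ s in (0:ℝ)..P, s ^ 2) = P ^ 3 / 3 := by
    rw [integral_pow]; norm_num
  have hI3 : (∫ s in (0:ℝ)..P, s ^ 3) = P ^ 4 / 4 := by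
    rw [integral_pow]; norm_num
  have hlt : (∫ s in (0:ℝ)..P, s ^ 3) <
      ∫ s in (0:ℝ)..P, s ^ 2 * Real.sqrt (1 + s ^ 2) := by
    apply intervalIntegral.integral_lt_integral_of_continuousOn_of_le_of_exists_lt hP
    · exact (continuous_pow 3).continuousOn
    · exact (Continuous.mul (continuous_pow 2)
        (Real.continuous_sqrt.comp (by continuity))).continuousOn
    · intro x hx
      have hx0 : 0 ≤ x := le_of_lt hx.1
      have hxle : x ≤ Real.sqrt (1 + x ^ 2) := by
        rw [le_sqrt hx0] <;> nlinarith
      calc x ^ 3 = x ^ 2 * x := by ring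
        _ ≤ x ^ 2 * Real.sqrt (1 + x ^ 2) := by
            exact mul_le_mul_of_nonneg_left hxle (sq_nonneg x)
    · refine ⟨P, ⟨hP.le, le_refl P⟩, ?_⟩
      have : P < Real.sqrt (1 + P ^ 2) := by
        rw [lt_sqrt hP.le]; nlinarith
      calc P ^ 3 = P ^ 2 * P := by ring
        _ < P ^ 2 * Real.sqrt (1 + P ^ 2) :=
            mul_lt_mul_of_pos_left this (by positivity)
  have hKEgt : KE > 3 * P / 4 := by
    rw [hKE, hI1, gt_iff_lt, lt_div_iff₀ (by positivity)]
    nlinarith [hlt, hI3]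
  have hKEpos : 0 < KE := lt_trans (by positivity) hKEgt
  have hRpos : 0 < R := by rw [hR]; positivity
  have hRP : R * P < 4 / 5 := by
    rw [hR]
    rw [div_mul_eq_mul_div, div_lt_iff₀ (by positivity)]
    nlinarith
  have hV1 : V ≥ -((9/16) * (R * P)) := by
    rw [hV]
    have hRPpos : 0 < R * P := mul_pos hRpos hP
    nlinarith [ha.1]
  have hV2 : -((9/16) * (R * P)) > -(9/20) := by nlinarith
  exact ⟨hV1, hV2, fun h => by linarith⟩
end

section
/- For the core-halo ansatz with R₁ = P^{-2}, R₂ = P, R₃ = P², Φ = χ_{[0,P]}, L = χ_{[-1,a]} (a ∈ (−1,1) fixed), and α = α(P) > 0 chosen so that total energy is zero, the virial V(P) satisfies V(P) → −∞ as P → ∞. In particular, zero-energy data of this family have arbitrarily negative virial. -/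
/-!
The mass `M`, the moment `J = ∫ η r³` and the potential integral `N = ∫ η r m(r)` (`m` the
enclosed mass) of a core–halo profile are explicit polynomials in the halo density `α`, so zero
energy, `KE = N / M²`, is a quadratic equation in `α`. Its constant term is negative because the
bare core is too tightly bound (`N / M² ~ P²` against `KE ≤ 1 + P`) and its leading coefficient
is positive, so it has a positive root. For the same reason, at that root the halo must carry at
least the mass of the core; since the halo lies beyond radius `P`, this gives `J / M ≥ P / 2`
and hence `V ≤ 3 (a - 1) P² / 16 → -∞`.
-/

open MeasureTheory Real Filter Set

lemma exists_pos_root_of_pos_of_neg {A B C : ℝ} (hA : 0 < A) (hC : C < 0) :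
    ∃ x, 0 < x ∧ A * (x * x) + B * x + C = 0 := by
  have hdisc : B ^ 2 < discrim A B C := by rw [discrim]; nlinarith
  have hs : discrim A B C = √(discrim A B C) * √(discrim A B C) :=
    (mul_self_sqrt (by nlinarith)).symm
  have hBs : B < √(discrim A B C) := lt_sqrt_of_sq_lt hdisc
  refine ⟨(-B + √(discrim A B C)) / (2 * A), by apply div_pos <;> linarith, ?_⟩
  exact (quadratic_eq_zero_iff hA.ne' hs _).2 (Or.inl rfl)

section ShellIntegrals

variable {c d : ℝ} {g : ℝ → ℝ}

lemma setIntegral_indicator_Icc (s : Set ℝ) :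
    ∫ r in s, (Icc c d).indicator g r = ∫ r in s ∩ Ioc c d, g r := by
  rw [← setIntegral_indicator measurableSet_Ioc]
  exact integral_congr_ae (ae_restrict_of_ae (indicator_ae_eq_of_ae_eq_set Ioc_ae_eq_Icc.symm))

lemma setIntegral_Ioi_indicator_Icc (hc : 0 ≤ c) (hcd : c ≤ d) :
    ∫ r in Ioi 0, (Icc c d).indicator g r = ∫ r in c..d, g r := by
  rw [setIntegral_indicator_Icc, intervalIntegral.integral_of_le hcd, inter_comm, Ioc_inter_Ioi,
    sup_eq_left.2 hc]

lemma setIntegral_Ioc_indicator_Icc (hc : 0 ≤ c) (u : ℝ) :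
    ∫ r in Ioc 0 u, (Icc c d).indicator g r = ∫ r in Ioc c (min u d), g r := by
  rw [setIntegral_indicator_Icc, Ioc_inter_Ioc, sup_eq_right.2 hc]

end ShellIntegrals

noncomputable def coreHalo (R₁ R₂ R₃ α r : ℝ) : ℝ :=
  (Icc 0 R₁).indicator 1 r + α * (Icc R₂ R₃).indicator 1 r

lemma coreHalo_mul (R₁ R₂ R₃ α : ℝ) (g : ℝ → ℝ) (r : ℝ) :
    coreHalo R₁ R₂ R₃ α r * g r = (Icc 0 R₁).indicator g r + α * (Icc R₂ R₃).indicator g r := by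
  by_cases h₁ : r ∈ Icc 0 R₁ <;> by_cases h₂ : r ∈ Icc R₂ R₃ <;> simp [coreHalo, h₁, h₂, add_mul]

section CoreHalo

variable {R₁ R₂ R₃ α : ℝ}

lemma integral_coreHalo_mul (h₁ : 0 ≤ R₁) (h₂ : 0 ≤ R₂) (h₂₃ : R₂ ≤ R₃) {g p q : ℝ → ℝ}
    (hp : Continuous p) (hq : Continuous q) (hgp : EqOn g p (Icc 0 R₁))
    (hgq : EqOn g q (Icc R₂ R₃)) :
    ∫ r in Ioi 0, coreHalo R₁ R₂ R₃ α r * g r = (∫ r in 0..R₁, p r) + α * ∫ r in R₂..R₃, q r := by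
  have hind : ∀ r, coreHalo R₁ R₂ R₃ α r * g r =
      (Icc 0 R₁).indicator p r + α * (Icc R₂ R₃).indicator q r := fun r => by
    rw [coreHalo_mul, indicator_congr hgp, indicator_congr hgq]
  have hint : ∀ {c d} {f : ℝ → ℝ}, Continuous f → Integrable ((Icc c d).indicator f) :=
    fun hf => (integrable_indicator_iff measurableSet_Icc).2 hf.integrableOn_Icc
  simp_rw [hind]
  rw [integral_add (hint hp).restrict ((hint hq).restrict.const_mul α), integral_const_mul,
    setIntegral_Ioi_indicator_Icc le_rfl h₁, setIntegral_Ioi_indicator_Icc h₂ h₂₃]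

lemma integral_coreHalo_mul_pow (h₁ : 0 ≤ R₁) (h₂ : 0 ≤ R₂) (h₂₃ : R₂ ≤ R₃) (n : ℕ) :
    ∫ r in Ioi 0, coreHalo R₁ R₂ R₃ α r * r ^ n =
      (R₁ ^ (n + 1) + α * (R₃ ^ (n + 1) - R₂ ^ (n + 1))) / (n + 1) := by
  rw [integral_coreHalo_mul h₁ h₂ h₂₃ (continuous_pow n) (continuous_pow n) (eqOn_refl _ _)
    (eqOn_refl _ _), integral_pow, integral_pow]
  field_simp
  ring

lemma setIntegral_Ioc_coreHalo_mul (h₂ : 0 ≤ R₂) {g : ℝ → ℝ} (hg : Continuous g) (u : ℝ) :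
    ∫ r in Ioc 0 u, coreHalo R₁ R₂ R₃ α r * g r =
      (∫ r in Ioc 0 (min u R₁), g r) + α * ∫ r in Ioc R₂ (min u R₃), g r := by
  have hint : ∀ {c d}, IntegrableOn ((Icc c d).indicator g) (Ioc 0 u) := fun {_ _} =>
    (hg.integrableOn_Icc.indicator measurableSet_Icc).mono_set Ioc_subset_Icc_self
  simp_rw [coreHalo_mul]
  rw [integral_add hint (hint.const_mul α), integral_const_mul,
    setIntegral_Ioc_indicator_Icc le_rfl, setIntegral_Ioc_indicator_Icc h₂]

lemma setIntegral_Ioc_coreHalo_mul_sq_of_mem_core (h₁₂ : R₁ < R₂) {u : ℝ} (hu : u ∈ Icc 0 R₁) :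
    ∫ r in Ioc 0 u, coreHalo R₁ R₂ R₃ α r * r ^ 2 = u ^ 3 / 3 := by
  have hR₂u : min u R₃ < R₂ := (min_le_left u R₃).trans_lt (hu.2.trans_lt h₁₂)
  rw [setIntegral_Ioc_coreHalo_mul (hu.1.trans (hu.2.trans h₁₂.le)) (continuous_pow 2),
    min_eq_left hu.2, Ioc_eq_empty hR₂u.not_gt, ← intervalIntegral.integral_of_le hu.1,
    integral_pow]
  norm_num

lemma setIntegral_Ioc_coreHalo_mul_sq_of_mem_halo (h₁ : 0 ≤ R₁) (h₁₂ : R₁ ≤ R₂) {u : ℝ}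
    (hu : u ∈ Icc R₂ R₃) :
    ∫ r in Ioc 0 u, coreHalo R₁ R₂ R₃ α r * r ^ 2 = (R₁ ^ 3 + α * (u ^ 3 - R₂ ^ 3)) / 3 := by
  rw [setIntegral_Ioc_coreHalo_mul (h₁.trans h₁₂) (continuous_pow 2), min_eq_right (h₁₂.trans hu.1),
    min_eq_left hu.2, ← intervalIntegral.integral_of_le h₁, ← intervalIntegral.integral_of_le hu.1,
    integral_pow, integral_pow]
  ring

noncomputable def coreHaloPotential (R₁ R₂ R₃ α : ℝ) : ℝ :=
  R₁ ^ 5 / 15 + α * (R₁ ^ 3 * (R₃ ^ 2 - R₂ ^ 2) / 6) +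
    α ^ 2 * ((R₃ ^ 5 - R₂ ^ 5) / 15 - R₂ ^ 3 * (R₃ ^ 2 - R₂ ^ 2) / 6)

lemma integral_coreHalo_potential (h₁ : 0 ≤ R₁) (h₁₂ : R₁ < R₂) (h₂₃ : R₂ ≤ R₃) :
    ∫ r in Ioi 0, coreHalo R₁ R₂ R₃ α r * r * ∫ r' in Ioc 0 r, coreHalo R₁ R₂ R₃ α r' * r' ^ 2 =
      coreHaloPotential R₁ R₂ R₃ α := by
  have hcore : EqOn (fun r => r * ∫ r' in Ioc 0 r, coreHalo R₁ R₂ R₃ α r' * r' ^ 2)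
      (fun r => r ^ 4 / 3) (Icc 0 R₁) := fun r hr => by
    simp only [setIntegral_Ioc_coreHalo_mul_sq_of_mem_core h₁₂ hr]
    ring
  have hhalo : EqOn (fun r => r * ∫ r' in Ioc 0 r, coreHalo R₁ R₂ R₃ α r' * r' ^ 2)
      (fun r => (R₁ ^ 3 - α * R₂ ^ 3) / 3 * r + α / 3 * r ^ 4) (Icc R₂ R₃) := fun r hr => by
    simp only [setIntegral_Ioc_coreHalo_mul_sq_of_mem_halo h₁ h₁₂.le hr]
    ring
  simp_rw [mul_assoc]
  rw [integral_coreHalo_mul h₁ (h₁.trans h₁₂.le) h₂₃ (by fun_prop) (by fun_prop) hcore hhalo,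
    intervalIntegral.integral_add (Continuous.intervalIntegrable (by fun_prop) _ _)
      (Continuous.intervalIntegrable (by fun_prop) _ _),
    intervalIntegral.integral_div, intervalIntegral.integral_const_mul,
    intervalIntegral.integral_const_mul, integral_id, integral_pow, integral_pow, coreHaloPotential]
  ring

end CoreHalo

section Balance

variable {K R₁ R₂ R₃ α : ℝ}

lemma coreSelfPotential_le_coreHaloPotential (hα : 0 ≤ α) (h₁ : 0 ≤ R₁) (h₂ : 0 ≤ R₂)
    (h₂₃ : R₂ ≤ R₃) : R₁ ^ 5 / 15 ≤ coreHaloPotential R₁ R₂ R₃ α := by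
  have h₃ : 0 ≤ R₃ := h₂.trans h₂₃
  have hR : 0 ≤ R₃ ^ 2 - R₂ ^ 2 := by nlinarith
  have hcross : 0 ≤ α * (R₁ ^ 3 * (R₃ ^ 2 - R₂ ^ 2) / 6) := by positivity
  have hhalo : 0 ≤ (R₃ ^ 5 - R₂ ^ 5) / 15 - R₂ ^ 3 * (R₃ ^ 2 - R₂ ^ 2) / 6 := by
    have : (R₃ ^ 5 - R₂ ^ 5) / 15 - R₂ ^ 3 * (R₃ ^ 2 - R₂ ^ 2) / 6 =
        (R₃ - R₂) ^ 2 * (2 * R₃ ^ 3 + 4 * R₃ ^ 2 * R₂ + 6 * R₃ * R₂ ^ 2 + 3 * R₂ ^ 3) / 30 := by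
      ring
    rw [this]
    positivity
  unfold coreHaloPotential
  nlinarith [mul_nonneg (sq_nonneg α) hhalo]

lemma exists_pos_coreHalo_balance (h₁ : 0 < R₁) (h₂ : 0 ≤ R₂) (h₂₃ : R₂ ≤ R₃)
    (hcore : 5 * K * R₁ < 3) (hhalo : 3 * R₃ ^ 5 < 5 * K * (R₃ ^ 3 - R₂ ^ 3) ^ 2) :
    ∃ α, 0 < α ∧
      K * ((R₁ ^ 3 + α * (R₃ ^ 3 - R₂ ^ 3)) / 3) ^ 2 = coreHaloPotential R₁ R₂ R₃ α := by
  have hlead : 0 < K * (R₃ ^ 3 - R₂ ^ 3) ^ 2 / 9 -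
      ((R₃ ^ 5 - R₂ ^ 5) / 15 - R₂ ^ 3 * (R₃ ^ 2 - R₂ ^ 2) / 6) := by
    have : 0 ≤ R₂ ^ 3 * (R₃ ^ 2 - R₂ ^ 2) := mul_nonneg (by positivity) (by nlinarith)
    nlinarith [pow_nonneg h₂ 5]
  have hconst : K * R₁ ^ 6 / 9 - R₁ ^ 5 / 15 < 0 := by
    have : K * R₁ ^ 6 / 9 - R₁ ^ 5 / 15 = R₁ ^ 5 * (5 * K * R₁ - 3) / 45 := by ring
    rw [this]
    exact div_neg_of_neg_of_pos (mul_neg_of_pos_of_neg (by positivity) (by linarith)) (by norm_num)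
  obtain ⟨α, hα, hroot⟩ := exists_pos_root_of_pos_of_neg
    (B := 2 * K * R₁ ^ 3 * (R₃ ^ 3 - R₂ ^ 3) / 9 - R₁ ^ 3 * (R₃ ^ 2 - R₂ ^ 2) / 6) hlead hconst
  exact ⟨α, hα, by unfold coreHaloPotential; linear_combination hroot⟩

lemma core_mass_le_halo_mass (hα : 0 ≤ α) (h₁ : 0 < R₁) (h₂ : 0 ≤ R₂) (h₂₃ : R₂ ≤ R₃)
    (hcore : 20 * K * R₁ < 3)
    (hbal : K * ((R₁ ^ 3 + α * (R₃ ^ 3 - R₂ ^ 3)) / 3) ^ 2 = coreHaloPotential R₁ R₂ R₃ α) :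
    R₁ ^ 3 ≤ α * (R₃ ^ 3 - R₂ ^ 3) := by
  by_contra! hlt
  have hN := coreSelfPotential_le_coreHaloPotential hα h₁.le h₂ h₂₃
  have hhalo : 0 ≤ α * (R₃ ^ 3 - R₂ ^ 3) :=
    mul_nonneg hα (sub_nonneg.2 (pow_le_pow_left₀ h₂ h₂₃ 3))
  have hM : ((R₁ ^ 3 + α * (R₃ ^ 3 - R₂ ^ 3)) / 3) ^ 2 < (2 * R₁ ^ 3 / 3) ^ 2 :=
    pow_lt_pow_left₀ (by linarith) (by positivity) two_ne_zero
  have hK : 0 < K := by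
    nlinarith [sq_nonneg ((R₁ ^ 3 + α * (R₃ ^ 3 - R₂ ^ 3)) / 3), pow_pos h₁ 5]
  nlinarith [pow_pos h₁ 5]

lemma coreHalo_mass_mul_le_moment (hα : 0 ≤ α) (h₂ : 0 ≤ R₂) (h₂₃ : R₂ ≤ R₃)
    (hdom : R₁ ^ 3 ≤ α * (R₃ ^ 3 - R₂ ^ 3)) :
    R₂ / 2 * ((R₁ ^ 3 + α * (R₃ ^ 3 - R₂ ^ 3)) / 3) ≤ (R₁ ^ 4 + α * (R₃ ^ 4 - R₂ ^ 4)) / 4 := by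
  have h₃ : 0 ≤ R₃ := h₂.trans h₂₃
  have hshell : R₂ * (R₃ ^ 3 - R₂ ^ 3) / 3 ≤ (R₃ ^ 4 - R₂ ^ 4) / 4 := by
    have : (R₃ ^ 4 - R₂ ^ 4) / 4 - R₂ * (R₃ ^ 3 - R₂ ^ 3) / 3 =
        (R₃ - R₂) ^ 2 * (3 * R₃ ^ 2 + 2 * R₃ * R₂ + R₂ ^ 2) / 12 := by ring
    nlinarith [show 0 ≤ (R₃ - R₂) ^ 2 * (3 * R₃ ^ 2 + 2 * R₃ * R₂ + R₂ ^ 2) / 12 by positivity]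
  nlinarith [mul_le_mul_of_nonneg_left hshell hα, mul_le_mul_of_nonneg_left hdom h₂,
    Even.pow_nonneg (by decide : Even 4) R₁]

end Balance

noncomputable def meanKineticEnergy (P : ℝ) : ℝ :=
  (∫ s in (0:ℝ)..P, s ^ 2 * √(1 + s ^ 2)) / ∫ s in (0:ℝ)..P, s ^ 2

section Kinetic

variable {P : ℝ}

lemma integral_sq_pos (hP : 0 < P) : 0 < ∫ s in (0:ℝ)..P, s ^ 2 := by
  rw [integral_pow]; norm_num; positivity

lemma one_le_meanKineticEnergy (hP : 0 < P) : 1 ≤ meanKineticEnergy P := by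
  rw [meanKineticEnergy, one_le_div (integral_sq_pos hP)]
  refine intervalIntegral.integral_mono_on hP.le (Continuous.intervalIntegrable (by fun_prop) _ _)
    (Continuous.intervalIntegrable (by fun_prop) _ _) fun s _ => ?_
  exact le_mul_of_one_le_right (sq_nonneg s) (one_le_sqrt.2 (by nlinarith))

lemma meanKineticEnergy_le (hP : 0 < P) : meanKineticEnergy P ≤ 1 + P := by
  rw [meanKineticEnergy, div_le_iff₀ (integral_sq_pos hP), ← intervalIntegral.integral_const_mul]
  refine intervalIntegral.integral_mono_on hP.le (Continuous.intervalIntegrable (by fun_prop) _ _)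
    (Continuous.intervalIntegrable (by fun_prop) _ _) fun s hs => ?_
  have : √(1 + s ^ 2) ≤ 1 + P := sqrt_le_iff.2 ⟨by linarith [hs.1], by nlinarith [hs.1, hs.2]⟩
  rw [mul_comm (1 + P)]
  exact mul_le_mul_of_nonneg_left this (sq_nonneg s)

end Kinetic

noncomputable def coreHaloFamily (P α : ℝ) : ℝ → ℝ :=
  coreHalo (P ^ (-2 : ℤ)) P (P ^ 2) α

lemma exists_coreHaloFamily_zero_energy {P : ℝ} (hP : 8 ≤ P) :
    ∃ α, 0 < α ∧ 0 < ∫ r in Ioi 0, coreHaloFamily P α r * r ^ 2 ∧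
      meanKineticEnergy P * (∫ r in Ioi 0, coreHaloFamily P α r * r ^ 2) ^ 2 =
        ∫ r in Ioi 0, coreHaloFamily P α r * r * ∫ r' in Ioc 0 r, coreHaloFamily P α r' * r' ^ 2 ∧
      P / 2 * (∫ r in Ioi 0, coreHaloFamily P α r * r ^ 2) ≤
        ∫ r in Ioi 0, coreHaloFamily P α r * r ^ 3 := by
  set e := P ^ (-2 : ℤ) with he_def
  set K := meanKineticEnergy P
  have hP0 : 0 < P := by linarith
  have he : 0 < e := by positivity
  have heP : e * P ^ 2 = 1 := by rw [he_def, zpow_neg, zpow_ofNat, inv_mul_cancel₀ (by positivity)]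
  have hK₁ : 1 ≤ K := one_le_meanKineticEnergy hP0
  have hK : K ≤ 1 + P := meanKineticEnergy_le hP0
  have hPP : P ≤ P ^ 2 := by nlinarith
  have hcore : 20 * K * e < 3 := by nlinarith
  have hhalo : 3 * (P ^ 2) ^ 5 < 5 * K * ((P ^ 2) ^ 3 - P ^ 3) ^ 2 := by
    have hshell : P ^ 6 / 2 ≤ (P ^ 2) ^ 3 - P ^ 3 := by
      nlinarith [pow_le_pow_left₀ (by norm_num) hP 3]
    calc 3 * (P ^ 2) ^ 5 < 5 * (P ^ 6 / 2) ^ 2 := by nlinarith [pow_pos hP0 10]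
      _ ≤ 5 * K * ((P ^ 2) ^ 3 - P ^ 3) ^ 2 := by
        nlinarith [pow_le_pow_left₀ (by positivity) hshell 2, sq_nonneg ((P ^ 2) ^ 3 - P ^ 3)]
  obtain ⟨α, hα, hbal⟩ := exists_pos_coreHalo_balance he hP0.le hPP (by linarith) hhalo
  have hdom := core_mass_le_halo_mass hα.le he hP0.le hPP hcore hbal
  have heP' : e < P := by nlinarith
  refine ⟨α, hα, ?_⟩
  simp only [coreHaloFamily]
  rw [integral_coreHalo_mul_pow he.le hP0.le hPP, integral_coreHalo_mul_pow he.le hP0.le hPP,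
    integral_coreHalo_potential he.le heP' hPP]
  push_cast
  norm_num
  exact ⟨by nlinarith [pow_pos he 3], hbal, coreHalo_mass_mul_le_moment hα.le hP0.le hPP hdom⟩

theorem core_halo_virial_unbounded_below
    (a : ℝ) (ha : a ∈ Set.Ioo (-1 : ℝ) 1)
    (η : ℝ → ℝ → ℝ → ℝ)
    (hη : ∀ P α r, η P α r = Set.indicator (Set.Icc 0 (P ^ (-2 : ℤ))) 1 r
        + α * Set.indicator (Set.Icc P (P ^ 2)) 1 r)
    (KE : ℝ → ℝ)
    (hKE : ∀ P, KE P = (∫ s in (0:ℝ)..P, s ^ 2 * Real.sqrt (1 + s ^ 2)) /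
        (∫ s in (0:ℝ)..P, s ^ 2))
    (PE : ℝ → ℝ → ℝ)
    (hPE : ∀ P α, PE P α =
      -((4 * π / (4 * π * ∫ r in Set.Ioi (0:ℝ), η P α r * r ^ 2)) ^ 2) *
        ∫ r in Set.Ioi (0:ℝ), η P α r * r * (∫ r' in Set.Ioc (0:ℝ) r, η P α r' * r' ^ 2))
    (V : ℝ → ℝ → ℝ)
    (hV : ∀ P α, V P α =
      ((∫ r in Set.Ioi (0:ℝ), η P α r * r ^ 3) / (∫ r in Set.Ioi (0:ℝ), η P α r * r ^ 2)) *
        (3 * P / 4) * ((a - 1) / 2)) :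
    ∃ α : ℝ → ℝ,
      (∀ᶠ P in atTop, 0 < α P ∧ KE P + PE P (α P) = 0) ∧
      Tendsto (fun P => V P (α P)) atTop atBot := by
  obtain rfl : η = coreHaloFamily := by
    funext P α r; exact hη P α r
  obtain rfl : KE = meanKineticEnergy := funext hKE
  have hzero : ∀ P, ∃ α, 8 ≤ P →
      0 < α ∧ meanKineticEnergy P + PE P α = 0 ∧ V P α ≤ 3 * (a - 1) / 16 * P ^ 2 := by
    intro P
    by_cases hP : 8 ≤ P
    · obtain ⟨α, hα, hM, hbal, hvir⟩ := exists_coreHaloFamily_zero_energy hP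
      refine ⟨α, fun _ => ⟨hα, ?_, ?_⟩⟩
      · rw [hPE, ← hbal, div_mul_cancel_left₀ (by positivity)]
        field_simp
        ring
      · rw [hV]
        calc _ ≤ P / 2 * (3 * P / 4) * ((a - 1) / 2) := by
              refine mul_le_mul_of_nonpos_right ?_ (by linarith [ha.2])
              exact mul_le_mul_of_nonneg_right ((le_div_iff₀ hM).2 hvir) (by positivity)
          _ = _ := by ring
    · exact ⟨0, fun h => absurd h hP⟩
  choose α hα using hzero
  refine ⟨α, (eventually_ge_atTop 8).mono fun P hP => ⟨(hα P hP).1, (hα P hP).2.1⟩, ?_⟩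
  refine tendsto_atBot_mono' atTop ((eventually_ge_atTop 8).mono fun P hP => (hα P hP).2.2) ?_
  exact (tendsto_pow_atTop two_ne_zero).const_mul_atTop_of_neg (by linarith [ha.2])
end
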